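/- arXiv:2411.09058 — 2 statements merged into one kernel-verified Lean document; each statement's English description precedes it below -/
import Mathlib

section
/- Let d ≥ 1 be an integer and let α, β be real numbers with 0 < α, 0 < β, and α + β < d. Then for all x, y ∈ ℝ^d with x ≠ y, one has ∫_{ℝ^d} ‖x − z‖^{α−d} ‖z − y‖^{β−d} dz = k_{α,β,d} · ‖x − y‖^{α+β−d}. -/
open MeasureTheory Real

/-- The composition constant `k_{α,β,d}` for Riesz kernels. -/
noncomputable def kRiesz (α β : ℝ) (d : ℕ) : ℝ :=
  π ^ ((d : ℝ) / 2) *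
    (Real.Gamma (α / 2) * Real.Gamma (β / 2) * Real.Gamma (((d : ℝ) - α - β) / 2)) /
    (Real.Gamma (((d : ℝ) - α) / 2) * Real.Gamma (((d : ℝ) - β) / 2) * Real.Gamma ((α + β) / 2))

/-!
Write both kernels as Gamma integrals, `Γ(a) s^(-a) = ∫₀^∞ t^(a-1) e^(-s t) dt` with `s = ‖x - z‖²`
and `s = ‖z - y‖²`. After Tonelli, the `z`-integral is a Gaussian integral, computed by completing
the square; the resulting `t`-integral is again a Gamma integral, and what remains is the Beta
integral `∫₀^∞ v^(p-1) (1+v)^(-(p+q)) dv = Γ(p) Γ(q) / Γ(p+q)`.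
-/

open Set ENNReal Module

theorem sq_rpow_neg {x : ℝ} (hx : 0 ≤ x) (a : ℝ) : (x ^ 2) ^ (-a) = x ^ (-(2 * a)) := by
  rw [← rpow_natCast_mul hx]
  push_cast
  ring_nf

theorem lintegral_rpow_mul_exp_neg_mul_Ioi {a r : ℝ} (ha : 0 < a) (hr : 0 < r) :
    ∫⁻ t in Ioi (0 : ℝ), ENNReal.ofReal (t ^ (a - 1) * rexp (-(r * t)))
      = ENNReal.ofReal (r ^ (-a) * Gamma a) := by
  have hint : IntegrableOn (fun t : ℝ => t ^ (a - 1) * rexp (-(r * t))) (Ioi 0) := by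
    simpa using integrableOn_rpow_mul_exp_neg_mul_rpow (p := 1) (by linarith) one_pos hr
  rw [← ofReal_integral_eq_lintegral_ofReal hint, integral_rpow_mul_exp_neg_mul_Ioi ha hr,
    one_div, inv_rpow hr.le, rpow_neg hr.le]
  filter_upwards [ae_restrict_mem measurableSet_Ioi] with t ht
  exact mul_nonneg (rpow_nonneg (le_of_lt ht) _) (exp_nonneg _)

theorem lintegral_rpow_mul_one_add_rpow_neg_Ioi {p q : ℝ} (hp : 0 < p) (hq : 0 < q) :
    ∫⁻ v in Ioi (0 : ℝ), ENNReal.ofReal (v ^ (p - 1) * (1 + v) ^ (-(p + q)))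
      = ENNReal.ofReal (Gamma p * Gamma q / Gamma (p + q)) := by
  -- Expand `Γ(p+q) (1+v)^(-(p+q))` as a Gamma integral in `s`; after swapping the integrals the
  -- `v`-integral is a Gamma integral as well.
  have hpq : 0 < p + q := by linarith
  have hΓpq : ENNReal.ofReal (Gamma (p + q)) ≠ 0 := by simpa using Gamma_pos_of_pos hpq
  rw [← ENNReal.mul_right_inj hΓpq ofReal_ne_top, ← ENNReal.ofReal_mul (Gamma_pos_of_pos hpq).le,
    mul_div_cancel₀ _ (Gamma_pos_of_pos hpq).ne', ← lintegral_const_mul' _ _ ofReal_ne_top]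
  calc ∫⁻ v in Ioi 0, ENNReal.ofReal (Gamma (p + q)) *
        ENNReal.ofReal (v ^ (p - 1) * (1 + v) ^ (-(p + q)))
      = ∫⁻ v in Ioi 0, ∫⁻ s in Ioi 0,
          ENNReal.ofReal (v ^ (p - 1) * rexp (-(s * v)) * (s ^ (p + q - 1) * rexp (-(1 * s)))) := by
        refine setLIntegral_congr_fun measurableSet_Ioi fun v (hv : 0 < v) => ?_
        calc _ = ENNReal.ofReal (v ^ (p - 1)) *
              ENNReal.ofReal ((1 + v) ^ (-(p + q)) * Gamma (p + q)) := by
              rw [← ENNReal.ofReal_mul (by positivity), ← ENNReal.ofReal_mul (by positivity)]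
              ring_nf
          _ = ∫⁻ s in Ioi 0, ENNReal.ofReal (v ^ (p - 1)) *
              ENNReal.ofReal (s ^ (p + q - 1) * rexp (-((1 + v) * s))) := by
              rw [lintegral_const_mul' _ _ ofReal_ne_top,
                lintegral_rpow_mul_exp_neg_mul_Ioi hpq (by positivity)]
          _ = _ := setLIntegral_congr_fun measurableSet_Ioi fun s (hs : 0 < s) => by
              rw [← ENNReal.ofReal_mul (by positivity),
                show -((1 + v) * s) = -(s * v) + -(1 * s) by ring, exp_add]
              ring_nf
    _ = ∫⁻ s in Ioi 0, ∫⁻ v in Ioi 0,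
          ENNReal.ofReal (v ^ (p - 1) * rexp (-(s * v)) * (s ^ (p + q - 1) * rexp (-(1 * s)))) :=
        lintegral_lintegral_swap (by fun_prop)
    _ = ∫⁻ s in Ioi 0,
          ENNReal.ofReal (Gamma p) * ENNReal.ofReal (s ^ (q - 1) * rexp (-(1 * s))) := by
        refine setLIntegral_congr_fun measurableSet_Ioi fun s (hs : 0 < s) => ?_
        have hpow : s ^ (-p) * s ^ (p + q - 1) = s ^ (q - 1) := by
          rw [← rpow_add hs]; ring_nf
        simp_rw [ENNReal.ofReal_mul' (mul_nonneg (rpow_nonneg hs.le _) (exp_nonneg _))]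
        rw [lintegral_mul_const' _ _ ofReal_ne_top, lintegral_rpow_mul_exp_neg_mul_Ioi hp hs,
          ← ENNReal.ofReal_mul (by positivity), ← ENNReal.ofReal_mul (by positivity), ← hpow]
        ring_nf
    _ = ENNReal.ofReal (Gamma p * Gamma q) := by
        rw [lintegral_const_mul' _ _ ofReal_ne_top, lintegral_rpow_mul_exp_neg_mul_Ioi hq one_pos,
          Real.one_rpow, one_mul, ENNReal.ofReal_mul (Gamma_pos_of_pos hp).le]

/-- The second Gamma integral is taken at rate `t Q` inside the first: this builds in the
substitution `u = t v` that turns the final integral into a Beta integral. -/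
theorem lintegral_lintegral_rpow_mul_exp_neg_mul_add_Ioi {a b P Q : ℝ} (ha : 0 < a) (hb : 0 < b)
    (hP : 0 < P) (hQ : 0 < Q) :
    ∫⁻ t in Ioi (0 : ℝ), ∫⁻ v in Ioi (0 : ℝ),
        ENNReal.ofReal (t ^ (a + b - 1) * v ^ (b - 1) * rexp (-(t * (P + v * Q))))
      = ENNReal.ofReal (P ^ (-a) * Gamma a * (Q ^ (-b) * Gamma b)) := by
  calc _ = ∫⁻ t in Ioi 0,
        ENNReal.ofReal (t ^ (a - 1) * rexp (-(P * t))) * ENNReal.ofReal (Q ^ (-b) * Gamma b) := by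
        refine setLIntegral_congr_fun measurableSet_Ioi fun t (ht : 0 < t) => ?_
        have hpow : t ^ (a + b - 1) * (t * Q) ^ (-b) = t ^ (a - 1) * Q ^ (-b) := by
          rw [mul_rpow ht.le hQ.le, ← mul_assoc, ← rpow_add ht]; ring_nf
        calc _ = ∫⁻ v in Ioi 0, ENNReal.ofReal (t ^ (a + b - 1) * rexp (-(P * t))) *
              ENNReal.ofReal (v ^ (b - 1) * rexp (-(t * Q * v))) :=
              setLIntegral_congr_fun measurableSet_Ioi fun v (hv : 0 < v) => by
                rw [← ENNReal.ofReal_mul (by positivity),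
                  show -(t * (P + v * Q)) = -(P * t) + -(t * Q * v) by ring, exp_add]
                ring_nf
          _ = _ := by
              rw [lintegral_const_mul' _ _ ofReal_ne_top,
                lintegral_rpow_mul_exp_neg_mul_Ioi hb (by positivity),
                ← ENNReal.ofReal_mul (by positivity), ← ENNReal.ofReal_mul (by positivity)]
              congr 1
              linear_combination rexp (-(P * t)) * Gamma b * hpow
    _ = _ := by
        rw [lintegral_mul_const' _ _ ofReal_ne_top, lintegral_rpow_mul_exp_neg_mul_Ioi ha hP,
          ← ENNReal.ofReal_mul (by positivity)]

theorem lintegral_lintegral_rpow_mul_one_add_rpow_neg_mul_exp_Ioi {p q c s : ℝ} (hp : 0 < p)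
    (hq : 0 < q) (hc : 0 < c) (hs : 0 < s) :
    ∫⁻ v in Ioi (0 : ℝ), ∫⁻ t in Ioi (0 : ℝ), ENNReal.ofReal
        (v ^ (p + c - 1) * (1 + v) ^ (-(p + q + c)) * (t ^ (c - 1) * rexp (-(s * v / (1 + v) * t))))
      = ENNReal.ofReal (s ^ (-c) * Gamma c * (Gamma p * Gamma q / Gamma (p + q))) := by
  calc _ = ∫⁻ v in Ioi 0, ENNReal.ofReal (s ^ (-c) * Gamma c) *
        ENNReal.ofReal (v ^ (p - 1) * (1 + v) ^ (-(p + q))) := by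
        refine setLIntegral_congr_fun measurableSet_Ioi fun v (hv : 0 < v) => ?_
        have h1v : 0 < 1 + v := by linarith
        have hpow : v ^ (p + c - 1) * (1 + v) ^ (-(p + q + c)) * (s * v / (1 + v)) ^ (-c)
            = s ^ (-c) * (v ^ (p - 1) * (1 + v) ^ (-(p + q))) := by
          rw [show p + c - 1 = p - 1 + c by ring, show -(p + q + c) = -(p + q) + -c by ring,
            rpow_add hv, rpow_add h1v, div_rpow (by positivity) h1v.le, mul_rpow hs.le hv.le,
            rpow_neg hv.le c]
          field_simp
        simp_rw [ENNReal.ofReal_mul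
          (by positivity : 0 ≤ v ^ (p + c - 1) * (1 + v) ^ (-(p + q + c)))]
        rw [lintegral_const_mul' _ _ ofReal_ne_top,
          lintegral_rpow_mul_exp_neg_mul_Ioi hc (by positivity),
          ← ENNReal.ofReal_mul (by positivity), ← ENNReal.ofReal_mul (by positivity)]
        congr 1
        linear_combination Gamma c * hpow
    _ = _ := by
        rw [lintegral_const_mul' _ _ ofReal_ne_top, lintegral_rpow_mul_one_add_rpow_neg_Ioi hp hq,
          ← ENNReal.ofReal_mul (by positivity)]

theorem lintegral_lintegral_lintegral_rotate {α β γ : Type*} [MeasurableSpace α]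
    [MeasurableSpace β] [MeasurableSpace γ] {μ : Measure α} {ν : Measure β} {ρ : Measure γ}
    [SFinite μ] [SFinite ν] [SFinite ρ] {f : α → β → γ → ℝ≥0∞}
    (hf : Measurable fun w : α × β × γ => f w.1 w.2.1 w.2.2) :
    ∫⁻ x, ∫⁻ y, ∫⁻ z, f x y z ∂ρ ∂ν ∂μ = ∫⁻ y, ∫⁻ z, ∫⁻ x, f x y z ∂μ ∂ρ ∂ν := by
  rw [lintegral_lintegral_swap]
  · exact lintegral_congr fun y => lintegral_lintegral_swap (by fun_prop)
  · exact (Measurable.lintegral_prod_right (by fun_prop)).aemeasurable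

section InnerProductSpace

variable {V : Type*} [NormedAddCommGroup V] [InnerProductSpace ℝ V]

theorem mul_norm_sub_sq_add_mul_norm_sub_sq {t u : ℝ} (htu : t + u ≠ 0) (x y z : V) :
    t * ‖x - z‖ ^ 2 + u * ‖z - y‖ ^ 2
      = (t + u) * ‖z - (t + u)⁻¹ • (t • x + u • y)‖ ^ 2 + t * u / (t + u) * ‖x - y‖ ^ 2 := by
  simp only [← real_inner_self_eq_norm_sq, inner_sub_left, inner_sub_right, real_inner_smul_left,
    real_inner_smul_right, inner_add_left, inner_add_right]
  rw [real_inner_comm z x, real_inner_comm z y, real_inner_comm x y]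
  field_simp
  ring

variable [FiniteDimensional ℝ V] [MeasurableSpace V] [BorelSpace V]

theorem lintegral_exp_neg_mul_norm_sub_sq {b : ℝ} (hb : 0 < b) (m : V) :
    ∫⁻ z : V, ENNReal.ofReal (rexp (-b * ‖z - m‖ ^ 2))
      = ENNReal.ofReal ((π / b) ^ (finrank ℝ V / 2 : ℝ)) := by
  have hint : Integrable fun z : V => rexp (-b * ‖z‖ ^ 2) := by
    simpa [← Complex.ofReal_pow, ← Complex.ofReal_mul, ← Complex.ofReal_neg, Complex.exp_ofReal_re]
      using (GaussianFourier.integrable_cexp_neg_mul_sq_norm_add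
        (b := b) (by simpa using hb) 0 (0 : V)).re
  rw [lintegral_sub_right_eq_self (fun z => ENNReal.ofReal (rexp (-b * ‖z‖ ^ 2))) m,
    ← ofReal_integral_eq_lintegral_ofReal hint (.of_forall fun _ => exp_nonneg _),
    GaussianFourier.integral_rexp_neg_mul_sq_norm hb]

theorem lintegral_exp_neg_mul_norm_sub_sq_add_mul_norm_sub_sq {t u : ℝ} (ht : 0 < t) (hu : 0 < u)
    (x y : V) :
    ∫⁻ z : V, ENNReal.ofReal (rexp (-(t * ‖x - z‖ ^ 2 + u * ‖z - y‖ ^ 2)))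
      = ENNReal.ofReal ((π / (t + u)) ^ (finrank ℝ V / 2 : ℝ) *
          rexp (-(t * u / (t + u) * ‖x - y‖ ^ 2))) := by
  have htu : 0 < t + u := by linarith
  simp_rw [mul_norm_sub_sq_add_mul_norm_sub_sq htu.ne', neg_add, exp_add,
    ENNReal.ofReal_mul (exp_nonneg _), ← neg_mul]
  rw [lintegral_mul_const' _ _ ofReal_ne_top, lintegral_exp_neg_mul_norm_sub_sq htu,
    ← ENNReal.ofReal_mul (by positivity)]

theorem lintegral_rpow_mul_exp_neg_mul_norm_sub_sq_add {p q c t v : ℝ}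
    (hV : (finrank ℝ V : ℝ) / 2 = p + q + c) (ht : 0 < t) (hv : 0 < v) (x y : V) :
    ∫⁻ z, ENNReal.ofReal (t ^ (q + c + (p + c) - 1) * v ^ (p + c - 1) *
        rexp (-(t * (‖x - z‖ ^ 2 + v * ‖z - y‖ ^ 2))))
      = ENNReal.ofReal (π ^ (p + q + c)) * ENNReal.ofReal (v ^ (p + c - 1) *
          (1 + v) ^ (-(p + q + c)) * (t ^ (c - 1) * rexp (-(‖x - y‖ ^ 2 * v / (1 + v) * t)))) := by
  have h1v : 0 < 1 + v := by linarith
  simp_rw [ENNReal.ofReal_mul (by positivity : 0 ≤ t ^ (q + c + (p + c) - 1) * v ^ (p + c - 1)),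
    mul_add t, ← mul_assoc t v]
  rw [lintegral_const_mul' _ _ ofReal_ne_top,
    lintegral_exp_neg_mul_norm_sub_sq_add_mul_norm_sub_sq ht (by positivity),
    ← ENNReal.ofReal_mul (by positivity), ← ENNReal.ofReal_mul (by positivity)]
  congr 1
  rw [hV, show t + t * v = t * (1 + v) by ring, div_rpow pi_pos.le (by positivity),
    mul_rpow ht.le h1v.le, show t * (t * v) / (t * (1 + v)) = t * v / (1 + v) by field_simp,
    show q + c + (p + c) - 1 = c - 1 + (p + q + c) by ring, rpow_add ht, rpow_neg h1v.le]
  field_simp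

/-- In terms of the theorem, `α = 2p`, `β = 2q` and `d = 2(p + q + c)`. -/
theorem ofReal_Gamma_mul_lintegral_norm_sub_rpow_mul_norm_sub_rpow {p q c : ℝ} (hp : 0 < p)
    (hq : 0 < q) (hc : 0 < c) (hV : (finrank ℝ V : ℝ) / 2 = p + q + c) {x y : V} (hxy : x ≠ y) :
    ENNReal.ofReal (Gamma (q + c) * Gamma (p + c)) *
        ∫⁻ z : V, ENNReal.ofReal (‖x - z‖ ^ (-(2 * (q + c))) * ‖z - y‖ ^ (-(2 * (p + c))))
      = ENNReal.ofReal (π ^ (p + q + c) *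
          ((‖x - y‖ ^ 2) ^ (-c) * Gamma c * (Gamma p * Gamma q / Gamma (p + q)))) := by
  have : Nontrivial V := Module.nontrivial_of_finrank_pos (R := ℝ) (by
    have : (0 : ℝ) < finrank ℝ V := by linarith
    exact_mod_cast this)
  have hr : 0 < ‖x - y‖ ^ 2 := by have := norm_sub_pos_iff.2 hxy; positivity
  have repr : ∀ᵐ z : V, ENNReal.ofReal (Gamma (q + c) * Gamma (p + c)) *
        ENNReal.ofReal (‖x - z‖ ^ (-(2 * (q + c))) * ‖z - y‖ ^ (-(2 * (p + c))))
      = ∫⁻ t in Ioi 0, ∫⁻ v in Ioi 0, ENNReal.ofReal (t ^ (q + c + (p + c) - 1) *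
          v ^ (p + c - 1) * rexp (-(t * (‖x - z‖ ^ 2 + v * ‖z - y‖ ^ 2)))) := by
    filter_upwards [Measure.ae_ne volume x, Measure.ae_ne volume y] with z hzx hzy
    have hxz := norm_sub_pos_iff.2 hzx.symm
    have hzy := norm_sub_pos_iff.2 hzy
    rw [lintegral_lintegral_rpow_mul_exp_neg_mul_add_Ioi (by positivity) (by positivity)
      (by positivity) (by positivity), ← ENNReal.ofReal_mul (by positivity),
      sq_rpow_neg hxz.le, sq_rpow_neg hzy.le]
    ring_nf
  calc _ = ∫⁻ z, ∫⁻ t in Ioi 0, ∫⁻ v in Ioi 0, ENNReal.ofReal (t ^ (q + c + (p + c) - 1) *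
          v ^ (p + c - 1) * rexp (-(t * (‖x - z‖ ^ 2 + v * ‖z - y‖ ^ 2)))) := by
        rw [← lintegral_const_mul' _ _ ofReal_ne_top]
        exact lintegral_congr_ae repr
    _ = ∫⁻ t in Ioi 0, ∫⁻ v in Ioi 0, ∫⁻ z, ENNReal.ofReal (t ^ (q + c + (p + c) - 1) *
          v ^ (p + c - 1) * rexp (-(t * (‖x - z‖ ^ 2 + v * ‖z - y‖ ^ 2)))) :=
        lintegral_lintegral_lintegral_rotate (by fun_prop)
    _ = ∫⁻ t in Ioi 0, ∫⁻ v in Ioi 0, ENNReal.ofReal (π ^ (p + q + c)) *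
          ENNReal.ofReal (v ^ (p + c - 1) * (1 + v) ^ (-(p + q + c)) *
            (t ^ (c - 1) * rexp (-(‖x - y‖ ^ 2 * v / (1 + v) * t)))) :=
        setLIntegral_congr_fun measurableSet_Ioi fun t ht =>
          setLIntegral_congr_fun measurableSet_Ioi fun v hv =>
            lintegral_rpow_mul_exp_neg_mul_norm_sub_sq_add hV ht hv x y
    _ = ENNReal.ofReal (π ^ (p + q + c)) * ∫⁻ v in Ioi 0, ∫⁻ t in Ioi 0, ENNReal.ofReal
          (v ^ (p + c - 1) * (1 + v) ^ (-(p + q + c)) *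
            (t ^ (c - 1) * rexp (-(‖x - y‖ ^ 2 * v / (1 + v) * t)))) := by
        simp_rw [lintegral_const_mul' _ _ ofReal_ne_top]
        rw [lintegral_lintegral_swap (by fun_prop)]
    _ = _ := by
        rw [lintegral_lintegral_rpow_mul_one_add_rpow_neg_mul_exp_Ioi hp hq hc hr,
          ← ENNReal.ofReal_mul (by positivity)]

theorem lintegral_norm_sub_rpow_mul_norm_sub_rpow {α β : ℝ} (hα : 0 < α) (hβ : 0 < β)
    (hαβ : α + β < finrank ℝ V) {x y : V} (hxy : x ≠ y) :
    ∫⁻ z : V, ENNReal.ofReal (‖x - z‖ ^ (α - finrank ℝ V) * ‖z - y‖ ^ (β - finrank ℝ V))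
      = ENNReal.ofReal (kRiesz α β (finrank ℝ V) * ‖x - y‖ ^ (α + β - finrank ℝ V)) := by
  unfold kRiesz
  set n : ℝ := (finrank ℝ V : ℝ)
  have key := ofReal_Gamma_mul_lintegral_norm_sub_rpow_mul_norm_sub_rpow (p := α / 2)
    (q := β / 2) (c := (n - α - β) / 2) (by positivity) (by positivity) (by linarith) (by ring) hxy
  rw [show β / 2 + (n - α - β) / 2 = (n - α) / 2 by ring,
    show α / 2 + (n - α - β) / 2 = (n - β) / 2 by ring, show -(2 * ((n - α) / 2)) = α - n by ring,
    show -(2 * ((n - β) / 2)) = β - n by ring, sq_rpow_neg (norm_nonneg _)] at key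
  have hΓa := Gamma_pos_of_pos (by linarith : 0 < (n - α) / 2)
  have hΓb := Gamma_pos_of_pos (by linarith : 0 < (n - β) / 2)
  rw [← ENNReal.mul_right_inj (by simpa using mul_pos hΓa hΓb) ofReal_ne_top, key,
    ← ENNReal.ofReal_mul (by positivity)]
  congr 1
  rw [show -(2 * ((n - α - β) / 2)) = α + β - n by ring,
    show π ^ (α / 2 + β / 2 + (n - α - β) / 2) = π ^ (n / 2) by ring_nf, add_div α β]
  field_simp

theorem integral_norm_sub_rpow_mul_norm_sub_rpow {α β : ℝ} (hα : 0 < α) (hβ : 0 < β)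
    (hαβ : α + β < finrank ℝ V) {x y : V} (hxy : x ≠ y) :
    ∫ z : V, ‖x - z‖ ^ (α - finrank ℝ V) * ‖z - y‖ ^ (β - finrank ℝ V)
      = kRiesz α β (finrank ℝ V) * ‖x - y‖ ^ (α + β - finrank ℝ V) := by
  have hk : 0 < kRiesz α β (finrank ℝ V) := by
    unfold kRiesz
    have := Gamma_pos_of_pos (by linarith : 0 < ((finrank ℝ V : ℝ) - α - β) / 2)
    have := Gamma_pos_of_pos (by linarith : 0 < ((finrank ℝ V : ℝ) - α) / 2)
    have := Gamma_pos_of_pos (by linarith : 0 < ((finrank ℝ V : ℝ) - β) / 2)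
    positivity
  rw [integral_eq_lintegral_of_nonneg_ae (.of_forall fun z => by positivity) (by fun_prop),
    lintegral_norm_sub_rpow_mul_norm_sub_rpow hα hβ hαβ hxy, toReal_ofReal (by positivity)]

end InnerProductSpace

theorem riesz_composition_general (d : ℕ) (α β : ℝ)
    (hα : 0 < α) (hβ : 0 < β) (hαβ : α + β < d)
    (x y : EuclideanSpace ℝ (Fin d)) (hxy : x ≠ y) :
    (∫ z : EuclideanSpace ℝ (Fin d), ‖x - z‖ ^ (α - (d : ℝ)) * ‖z - y‖ ^ (β - (d : ℝ)))
      = kRiesz α β d * ‖x - y‖ ^ (α + β - (d : ℝ)) := by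
  simpa only [finrank_euclideanSpace_fin] using
    integral_norm_sub_rpow_mul_norm_sub_rpow hα hβ (by simpa using hαβ) hxy

/-- Composition formula for Riesz kernels. -/
theorem riesz_composition (d : ℕ) (hd : 1 ≤ d) (α β : ℝ)
    (hα : 0 < α) (hβ : 0 < β) (hαβ : α + β < d)
    (x y : EuclideanSpace ℝ (Fin d)) (hxy : x ≠ y) :
    (∫ z : EuclideanSpace ℝ (Fin d), ‖x - z‖ ^ (α - (d : ℝ)) * ‖z - y‖ ^ (β - (d : ℝ)))
      = kRiesz α β d * ‖x - y‖ ^ (α + β - (d : ℝ)) :=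
  riesz_composition_general d α β hα hβ hαβ x y hxy
end

section
/- Let d ≥ 1 and n ≥ 2 be integers, let 1 ≤ k ≤ n−1, and let η = (η_1, …, η_n) ∈ (ℝ^d)^n with η_i ≠ 0 for all 1 ≤ i ≤ k. Then φ(η_1, …, η_n) ≤ min(1, Π_{i=1}^k ‖η_i‖^{−2}) · φ(η_{k+1}, …, η_n). -/
/-!
Split the weights `w ∈ S_n` into the first `k` coordinates `u` and the last `n - k`
coordinates `v`. By Tonelli, `φ(η)` is the integral over `v ∈ S_{n-k}` of
`exp(-Σ v_j ‖η_{k+j}‖²)` times the integral of `exp(-Σ u_i ‖η_i‖²)` over the simplex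
`{u > 0, Σ u_i < 1 - Σ v_j}`. That inner integral is at most the volume of this simplex, hence
at most `1`, and at most the integral over the whole orthant `(0, ∞)^k`, which is
`∏ ‖η_i‖⁻²`.
-/

open MeasureTheory Real

/-- The function `φ(η₁,…,η_n) = ∫_{S_n} exp(-Σ w_i ‖η_i‖²) dw`, where
`S_n = {w : w_i > 0, Σ w_i < 1}`. -/
noncomputable def phiFn (d n : ℕ) (η : Fin n → EuclideanSpace ℝ (Fin d)) : ℝ :=
  ∫ w in {w : Fin n → ℝ | (∀ i, 0 < w i) ∧ ∑ i, w i < 1},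
    Real.exp (-∑ i, w i * ‖η i‖ ^ 2)

open Set ENNReal

section
variable {ι κ : Type*} [Fintype ι] [Fintype κ]

variable (ι) in
def simplex (t : ℝ) : Set (ι → ℝ) :=
  {w | (∀ i, 0 < w i) ∧ ∑ i, w i < t}

theorem measurableSet_simplex (t : ℝ) : MeasurableSet (simplex ι t) := by
  have : simplex ι t = (univ.pi fun _ => Ioi 0) ∩ {w | ∑ i, w i < t} := by
    ext w
    simp [simplex, mem_pi]
  rw [this]
  exact (MeasurableSet.univ_pi fun _ => measurableSet_Ioi).inter
    (measurableSet_lt (by fun_prop) measurable_const)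

theorem simplex_subset_pi_Ioi (t : ℝ) : simplex ι t ⊆ univ.pi fun _ => Ioi 0 :=
  fun _ hw i _ => hw.1 i

theorem simplex_subset_pi_Ioo {t : ℝ} (ht : t ≤ 1) : simplex ι t ⊆ univ.pi fun _ => Ioo 0 1 :=
  fun _ hw i _ =>
    ⟨hw.1 i, (Finset.single_le_sum (fun j _ => (hw.1 j).le) (Finset.mem_univ i)).trans_lt
      (hw.2.trans_le ht)⟩

theorem volume_simplex_le_one {t : ℝ} (ht : t ≤ 1) : volume (simplex ι t) ≤ 1 :=
  (measure_mono (simplex_subset_pi_Ioo ht)).trans (by simp [volume_pi_pi, Real.volume_Ioo])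

theorem sumElim_mem_simplex_iff {t : ℝ} {u : ι → ℝ} {v : κ → ℝ} :
    Sum.elim u v ∈ simplex (ι ⊕ κ) t ↔ v ∈ simplex κ t ∧ u ∈ simplex ι (t - ∑ j, v j) := by
  simp only [simplex, mem_ofPred_eq, Sum.forall, Sum.elim_inl, Sum.elim_inr,
    Fintype.sum_sum_type]
  constructor
  · rintro ⟨⟨hu, hv⟩, hsum⟩
    have : 0 ≤ ∑ i, u i := Finset.sum_nonneg fun i _ => (hu i).le
    exact ⟨⟨hv, by linarith⟩, hu, by linarith⟩
  · rintro ⟨⟨hv, -⟩, hu, hsum⟩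
    exact ⟨⟨hu, hv⟩, by linarith⟩

theorem integrableOn_Ioi_exp_neg_mul {a : ℝ} (ha : 0 < a) :
    IntegrableOn (fun t => exp (-(t * a))) (Ioi 0) := by
  simpa only [neg_mul_eq_neg_mul, mul_comm] using exp_neg_integrableOn_Ioi 0 ha

theorem integral_Ioi_exp_neg_mul {a : ℝ} (ha : 0 < a) :
    ∫ t in Ioi 0, exp (-(t * a)) = a⁻¹ := by
  have := integral_exp_mul_Ioi (neg_neg_of_pos ha) 0
  simp only [mul_zero, exp_zero, neg_div_neg_eq, one_div, neg_mul] at this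
  simpa only [mul_comm] using this

theorem setLIntegral_pi_Ioi_exp_neg {a : ι → ℝ} (ha : ∀ i, 0 < a i) :
    ∫⁻ u in univ.pi (fun _ => Ioi 0), ENNReal.ofReal (exp (-∑ i, u i * a i)) =
      ENNReal.ofReal (∏ i, (a i)⁻¹) := by
  simp_rw [volume_pi, Measure.restrict_pi_pi, ← Finset.sum_neg_distrib, exp_sum]
  rw [← ofReal_integral_eq_lintegral_ofReal
      (Integrable.fintype_prod fun i => integrableOn_Ioi_exp_neg_mul (ha i))
      (ae_of_all _ fun u => by positivity),
    integral_fintype_prod_eq_prod (fun i t => exp (-(t * a i)))]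
  simp_rw [integral_Ioi_exp_neg_mul (ha _)]

noncomputable def simplexLaplace (c : ι → ℝ) (t : ℝ) : ℝ≥0∞ :=
  ∫⁻ w in simplex ι t, ENNReal.ofReal (exp (-∑ i, w i * c i))

theorem integral_simplex_eq_toReal_simplexLaplace (c : ι → ℝ) (t : ℝ) :
    ∫ w in simplex ι t, exp (-∑ i, w i * c i) = (simplexLaplace c t).toReal :=
  integral_eq_lintegral_of_nonneg_ae (ae_of_all _ fun _ => (exp_pos _).le)
    (by fun_prop : Measurable fun w : ι → ℝ => exp (-∑ i, w i * c i)).aestronglyMeasurable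

theorem simplexLaplace_le_one {c : ι → ℝ} (hc : ∀ i, 0 ≤ c i) {t : ℝ} (ht : t ≤ 1) :
    simplexLaplace c t ≤ 1 :=
  calc simplexLaplace c t ≤ ∫⁻ _ in simplex ι t, 1 :=
        setLIntegral_mono measurable_const fun _ hw => ofReal_le_one.2 <| exp_le_one_iff.2 <|
          neg_nonpos.2 <| Finset.sum_nonneg fun i _ => mul_nonneg (hw.1 i).le (hc i)
    _ = volume (simplex ι t) := setLIntegral_one _
    _ ≤ 1 := volume_simplex_le_one ht

theorem simplexLaplace_le_prod_inv {a : ι → ℝ} (ha : ∀ i, 0 < a i) (t : ℝ) :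
    simplexLaplace a t ≤ ENNReal.ofReal (∏ i, (a i)⁻¹) :=
  (lintegral_mono_set (simplex_subset_pi_Ioi t)).trans_eq (setLIntegral_pi_Ioi_exp_neg ha)

theorem simplexLaplace_comp_equiv (e : ι ≃ κ) (c : κ → ℝ) (t : ℝ) :
    simplexLaplace (c ∘ e) t = simplexLaplace c t := by
  have hE (u : ι → ℝ) (i : ι) : MeasurableEquiv.piCongrLeft (fun _ => ℝ) e u (e i) = u i := by
    rw [MeasurableEquiv.coe_piCongrLeft, Equiv.piCongrLeft_apply_apply]
  have hpre : MeasurableEquiv.piCongrLeft (fun _ => ℝ) e ⁻¹' simplex κ t = simplex ι t := by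
    ext u
    simp only [simplex, mem_preimage, mem_ofPred_eq, ← e.forall_congr_right, ← e.sum_comp, hE]
  unfold simplexLaplace
  rw [← (volume_measurePreserving_piCongrLeft (fun _ => ℝ) e).setLIntegral_comp_preimage_emb
    (MeasurableEquiv.measurableEmbedding _), hpre]
  simp only [← e.sum_comp, hE, Function.comp_apply]

theorem ofReal_exp_neg_sum_sumElim (u a : ι → ℝ) (v b : κ → ℝ) :
    ENNReal.ofReal (exp (-∑ s, Sum.elim u v s * Sum.elim a b s)) =
      ENNReal.ofReal (exp (-∑ i, u i * a i)) * ENNReal.ofReal (exp (-∑ j, v j * b j)) := by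
  rw [Fintype.sum_sum_type, neg_add, exp_add, ENNReal.ofReal_mul (exp_pos _).le]
  rfl

theorem simplexLaplace_sumElim (a : ι → ℝ) (b : κ → ℝ) (t : ℝ) :
    simplexLaplace (Sum.elim a b) t =
      ∫⁻ v in simplex κ t,
        ENNReal.ofReal (exp (-∑ j, v j * b j)) * simplexLaplace a (t - ∑ j, v j) := by
  set g : (ι → ℝ) → ℝ≥0∞ := fun u => ENNReal.ofReal (exp (-∑ i, u i * a i))
  set h : (κ → ℝ) → ℝ≥0∞ := fun v => ENNReal.ofReal (exp (-∑ j, v j * b j))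
  set T : Set ((ι → ℝ) × (κ → ℝ)) := {p | p.2 ∈ simplex κ t ∧ p.1 ∈ simplex ι (t - ∑ j, p.2 j)}
  have hpre : (MeasurableEquiv.sumPiEquivProdPi fun _ => ℝ).symm ⁻¹' simplex (ι ⊕ κ) t = T := by
    ext p
    exact sumElim_mem_simplex_iff
  have hT : MeasurableSet T :=
    hpre ▸ (measurableSet_simplex t).preimage (MeasurableEquiv.measurable _)
  have hslice (u : ι → ℝ) (v : κ → ℝ) : T.indicator (fun p => g p.1 * h p.2) (u, v) =
      (simplex κ t).indicator h v * (simplex ι (t - ∑ j, v j)).indicator g u := by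
    by_cases hv : v ∈ simplex κ t <;> by_cases hu : u ∈ simplex ι (t - ∑ j, v j) <;>
      simp [T, hu, hv, mul_comm]
  calc simplexLaplace (Sum.elim a b) t
      = ∫⁻ p in T, g p.1 * h p.2 := by
        rw [simplexLaplace, ← (volume_measurePreserving_sumPiEquivProdPi_symm fun _ => ℝ)
          |>.setLIntegral_comp_preimage_emb (MeasurableEquiv.measurableEmbedding _), hpre]
        exact lintegral_congr fun p => ofReal_exp_neg_sum_sumElim p.1 a p.2 b
    _ = ∫⁻ v, ∫⁻ u, T.indicator (fun p => g p.1 * h p.2) (u, v) := by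
        have hgh : Measurable fun p : (ι → ℝ) × (κ → ℝ) => g p.1 * h p.2 := by fun_prop
        rw [← lintegral_indicator hT, Measure.volume_eq_prod,
          lintegral_prod_symm _ (hgh.indicator hT).aemeasurable]
    _ = ∫⁻ v, (simplex κ t).indicator (fun v => h v * simplexLaplace a (t - ∑ j, v j)) v := by
        refine lintegral_congr fun v => ?_
        simp_rw [hslice, indicator_mul_left]
        rw [lintegral_const_mul _
            ((by fun_prop : Measurable g).indicator (measurableSet_simplex _)),
          lintegral_indicator (measurableSet_simplex _)]
        rfl
    _ = _ := lintegral_indicator (measurableSet_simplex t) _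

theorem simplexLaplace_sumElim_le (a : ι → ℝ) (b : κ → ℝ) {t : ℝ} {M : ℝ≥0∞}
    (hM : ∀ s ≤ t, simplexLaplace a s ≤ M) :
    simplexLaplace (Sum.elim a b) t ≤ simplexLaplace b t * M := by
  rw [simplexLaplace_sumElim, simplexLaplace, ← lintegral_mul_const _ (by fun_prop)]
  refine setLIntegral_mono (by fun_prop) fun v hv => ?_
  have : 0 ≤ ∑ j, v j := Finset.sum_nonneg fun j _ => (hv.1 j).le
  gcongr
  exact hM _ (by linarith)

theorem toReal_simplexLaplace_sumElim_le {a : ι → ℝ} {b : κ → ℝ} (ha : ∀ i, 0 < a i)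
    (hb : ∀ j, 0 ≤ b j) :
    (simplexLaplace (Sum.elim a b) 1).toReal ≤
      min 1 (∏ i, (a i)⁻¹) * (simplexLaplace b 1).toReal := by
  have hM (s : ℝ) (hs : s ≤ 1) : simplexLaplace a s ≤ min 1 (ENNReal.ofReal (∏ i, (a i)⁻¹)) :=
    le_min (simplexLaplace_le_one (fun i => (ha i).le) hs) (simplexLaplace_le_prod_inv ha s)
  have hb_ne_top : simplexLaplace b 1 ≠ ⊤ :=
    ((simplexLaplace_le_one hb le_rfl).trans_lt one_lt_top).ne
  calc (simplexLaplace (Sum.elim a b) 1).toReal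
      ≤ (simplexLaplace b 1 * min 1 (ENNReal.ofReal (∏ i, (a i)⁻¹))).toReal :=
        toReal_mono (mul_ne_top hb_ne_top (by simp)) (simplexLaplace_sumElim_le a b hM)
    _ = min 1 (∏ i, (a i)⁻¹) * (simplexLaplace b 1).toReal := by
        rw [toReal_mul, toReal_min one_ne_top ofReal_ne_top, toReal_one,
          toReal_ofReal (Finset.prod_nonneg fun i _ => (inv_pos.2 (ha i)).le), mul_comm]

end

theorem phiFn_eq_toReal_simplexLaplace (d n : ℕ) (η : Fin n → EuclideanSpace ℝ (Fin d)) :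
    phiFn d n η = (simplexLaplace (fun i => ‖η i‖ ^ 2) 1).toReal :=
  integral_simplex_eq_toReal_simplexLaplace _ 1

/-- `φ(η₁,…,η_n) ≤ min(1, ∏_{i=1}^k ‖η_i‖^{-2}) φ(η_{k+1},…,η_n)`, provided
`η₁,…,η_k` are nonzero. Here `η i` for `i : Fin n` corresponds to the
mathematical `η_{i+1}`. -/
theorem phiFn_le_tail (d n k : ℕ) (hkn : k ≤ n - 1)
    (η : Fin n → EuclideanSpace ℝ (Fin d))
    (hη : ∀ i : Fin n, (i : ℕ) < k → η i ≠ 0) :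
    phiFn d n η ≤
      min 1 (∏ i : Fin k, ‖η (Fin.castLE (by omega) i)‖ ^ (-2 : ℝ)) *
        phiFn d (n - k) (fun j => η ⟨k + (j : ℕ), by have := j.isLt; omega⟩) := by
  have hsplit : k + (n - k) = n := by omega
  set a : Fin k → ℝ := fun i => ‖η (Fin.castLE (by omega) i)‖ ^ 2
  set b : Fin (n - k) → ℝ := fun j => ‖η ⟨k + (j : ℕ), by have := j.isLt; omega⟩‖ ^ 2
  have ha (i : Fin k) : 0 < a i := by
    have := hη (Fin.castLE (by omega) i) i.isLt
    positivity
  have hab : (fun i => ‖η i‖ ^ 2) ∘ (finSumFinEquiv.trans (finCongr hsplit)) = Sum.elim a b := by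
    funext s
    cases s <;> rfl
  have hprod : ∏ i : Fin k, ‖η (Fin.castLE (by omega) i)‖ ^ (-2 : ℝ) = ∏ i, (a i)⁻¹ :=
    Finset.prod_congr rfl fun i _ => by rw [Real.rpow_neg (norm_nonneg _), Real.rpow_two]
  rw [phiFn_eq_toReal_simplexLaplace, phiFn_eq_toReal_simplexLaplace, hprod,
    ← simplexLaplace_comp_equiv (finSumFinEquiv.trans (finCongr hsplit)), hab]
  exact toReal_simplexLaplace_sumElim_le ha fun _ => sq_nonneg _
end
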